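/- Let 0<q<1, φ ∈ [0,2π). The operators on ℓ²(ℤ₊): θ_φ(z₂²) = e^{iφ} I, θ_φ(z₂¹) = θ_φ(z₁²) = 0, θ_φ(z₁¹) = q^{-1} CS, satisfy the defining relations of Pol(Mat₂)_q; in particular (z₁¹)*z₁¹ = q² z₁¹(z₁¹)* − (1−q²)(z₂¹(z₂¹)* + z₁²(z₁²)*) + q^{-2}(1−q²)² z₂²(z₂²)* + (1−q²)·1 becomes q^{-2}(CS)*(CS) = (CS)(CS)* + q^{-2}(1−q²)² + (1−q²), which holds. -/

import Mathlib

/-!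
`T = CS` is a weighted shift, `T eₙ = wₙ eₙ₊₁` with `wₙ² = 1 - q^(2(n+1))`. Hence `T*T` and `TT*`
are diagonal in the basis, with eigenvalues `wₙ²` and `wₙ₋₁²` (and `0` on `e₀`), so the relation
`q⁻² T*T = TT* + (q⁻²(1-q²)² + (1-q²))` reduces on `eₙ` to the scalar identity
`q⁻²(1 - q^(2(n+1))) = (1 - q^(2n)) + q⁻²(1-q²)² + (1-q²)`. The operator `e^{iφ}·I` is unitary,
which settles the remaining relations.
-/

open ContinuousLinearMap

namespace HilbertBasis

variable {𝕜 H : Type*} [RCLike 𝕜] [NormedAddCommGroup H] [InnerProductSpace 𝕜 H]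

theorem ext_inner {ι : Type*} (e : HilbertBasis ι 𝕜 H) {x y : H}
    (h : ∀ i, inner 𝕜 (e i) x = inner 𝕜 (e i) y) : x = y :=
  e.repr.injective <| lp.ext <| funext fun i => by simpa only [e.repr_apply_apply] using h i

theorem ext_continuousLinearMap {ι E : Type*} [NormedAddCommGroup E] [NormedSpace 𝕜 E]
    (e : HilbertBasis ι 𝕜 H) {A B : H →L[𝕜] E} (h : ∀ i, A (e i) = B (e i)) : A = B :=
  ContinuousLinearMap.ext_on (Submodule.dense_iff_topologicalClosure_eq_top.mpr e.dense_span)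
    (Set.forall_mem_range.mpr h)

def IsWeightedShift (e : HilbertBasis ℕ 𝕜 H) (c : ℕ → 𝕜) (T : H →L[𝕜] H) : Prop :=
  ∀ n, T (e n) = c n • e (n + 1)

namespace IsWeightedShift

variable [CompleteSpace H] {e : HilbertBasis ℕ 𝕜 H} {c : ℕ → 𝕜} {T : H →L[𝕜] H}

theorem inner_adjoint_apply (hT : e.IsWeightedShift c T) (k n : ℕ) :
    inner 𝕜 (e k) (adjoint T (e n)) = if k + 1 = n then starRingEnd 𝕜 (c k) else 0 := by
  rw [adjoint_inner_right, hT k, inner_smul_left, orthonormal_iff_ite.mp e.orthonormal]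
  split_ifs <;> simp

theorem adjoint_apply_zero (hT : e.IsWeightedShift c T) : adjoint T (e 0) = 0 :=
  e.ext_inner fun k => by simp [hT.inner_adjoint_apply]

theorem adjoint_apply_succ (hT : e.IsWeightedShift c T) (n : ℕ) :
    adjoint T (e (n + 1)) = starRingEnd 𝕜 (c n) • e n :=
  e.ext_inner fun k => by
    rw [hT.inner_adjoint_apply, inner_smul_right, orthonormal_iff_ite.mp e.orthonormal]
    by_cases hk : k = n <;> simp [hk]

theorem adjoint_mul_self_apply (hT : e.IsWeightedShift c T) (n : ℕ) :
    (adjoint T * T) (e n) = ((‖c n‖ ^ 2 : ℝ) : 𝕜) • e n := by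
  rw [mul_apply_eq_comp, hT n, map_smul, hT.adjoint_apply_succ, smul_smul, RCLike.mul_conj]
  norm_cast

theorem mul_adjoint_apply_zero (hT : e.IsWeightedShift c T) : (T * adjoint T) (e 0) = 0 := by
  rw [mul_apply_eq_comp, hT.adjoint_apply_zero, map_zero]

theorem mul_adjoint_apply_succ (hT : e.IsWeightedShift c T) (n : ℕ) :
    (T * adjoint T) (e (n + 1)) = ((‖c n‖ ^ 2 : ℝ) : 𝕜) • e (n + 1) := by
  rw [mul_apply_eq_comp, hT.adjoint_apply_succ, map_smul, hT n, smul_smul, RCLike.conj_mul]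
  norm_cast

theorem smul_adjoint_mul_self_eq (hT : e.IsWeightedShift c T) {a b : ℝ}
    (h_zero : a * ‖c 0‖ ^ 2 = b) (h_succ : ∀ n, a * ‖c (n + 1)‖ ^ 2 = ‖c n‖ ^ 2 + b) :
    (a : 𝕜) • (adjoint T * T) = T * adjoint T + (b : 𝕜) • 1 := by
  refine e.ext_continuousLinearMap fun n => ?_
  rw [smul_apply, hT.adjoint_mul_self_apply, smul_smul, add_apply, smul_apply, one_apply_eq_self]
  cases n with
  | zero => rw [hT.mul_adjoint_apply_zero, zero_add, ← RCLike.ofReal_mul, h_zero]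
  | succ n =>
    rw [hT.mul_adjoint_apply_succ, ← add_smul, ← RCLike.ofReal_mul, ← RCLike.ofReal_add, h_succ]

end IsWeightedShift

end HilbertBasis

theorem inv_sq_mul_one_sub_pow_two_mul_succ {q : ℝ} (hq : q ≠ 0) (n : ℕ) :
    q⁻¹ ^ 2 * (1 - q ^ (2 * (n + 1)))
      = (1 - q ^ (2 * n)) + (q⁻¹ ^ 2 * (1 - q ^ 2) ^ 2 + (1 - q ^ 2)) := by
  rw [mul_add, mul_one, pow_add]
  field_simp
  ring

theorem Complex.exp_ofReal_mul_I_mem_unitary (φ : ℝ) :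
    Complex.exp (φ * Complex.I) ∈ unitary ℂ := by
  simp [Unitary.mem_iff, ← Complex.exp_conj, ← Complex.exp_add]

open ContinuousLinearMap in
theorem stmt10_general {H : Type*} [NormedAddCommGroup H] [InnerProductSpace ℂ H] [CompleteSpace H]
    (q : ℝ) (hq0 : 0 < q) (hq1 : q < 1)
    (φ : ℝ)
    (e : HilbertBasis ℕ ℂ H)
    (S C : H →L[ℂ] H)
    (hS : ∀ n : ℕ, S (e n) = e (n + 1))
    (hC : ∀ n : ℕ, C (e n) = ((Real.sqrt (1 - q ^ (2 * n)) : ℝ) : ℂ) • e n)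
    (W11 W12 W21 W22 : H →L[ℂ] H)
    (hW22 : W22 = Complex.exp (φ * Complex.I) • (1 : H →L[ℂ] H))
    (hW21 : W21 = 0) (hW12 : W12 = 0)
    (hW11 : W11 = ((q⁻¹ : ℝ) : ℂ) • (C * S)) :
    -- the relations (ff2) for the θ_φ operators
    (adjoint W11 * W11
        = ((q ^ 2 : ℝ) : ℂ) • (W11 * adjoint W11)
          - ((1 - q ^ 2 : ℝ) : ℂ) • (W21 * adjoint W21 + W12 * adjoint W12)
          + ((q⁻¹ ^ 2 * (1 - q ^ 2) ^ 2 : ℝ) : ℂ) • (W22 * adjoint W22)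
          + ((1 - q ^ 2 : ℝ) : ℂ) • 1)
    ∧ (adjoint W21 * W21
        = ((q ^ 2 : ℝ) : ℂ) • (W21 * adjoint W21)
          - ((1 - q ^ 2 : ℝ) : ℂ) • (W22 * adjoint W22) + ((1 - q ^ 2 : ℝ) : ℂ) • 1)
    ∧ (adjoint W12 * W12
        = ((q ^ 2 : ℝ) : ℂ) • (W12 * adjoint W12)
          - ((1 - q ^ 2 : ℝ) : ℂ) • (W22 * adjoint W22) + ((1 - q ^ 2 : ℝ) : ℂ) • 1)
    ∧ (adjoint W22 * W22
        = ((q ^ 2 : ℝ) : ℂ) • (W22 * adjoint W22) + ((1 - q ^ 2 : ℝ) : ℂ) • 1)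
    -- the simplified form of the first relation
    ∧ ((q⁻¹ ^ 2 : ℝ) : ℂ) • (adjoint (C * S) * (C * S))
        = (C * S) * adjoint (C * S)
          + ((q⁻¹ ^ 2 * (1 - q ^ 2) ^ 2 + (1 - q ^ 2) : ℝ) : ℂ) • 1 := by
  have hCS : e.IsWeightedShift (fun n => ((√(1 - q ^ (2 * (n + 1))) : ℝ) : ℂ)) (C * S) :=
    fun n => by rw [mul_apply_eq_comp, hS, hC]
  have hweight (n : ℕ) :
      ‖((√(1 - q ^ (2 * (n + 1))) : ℝ) : ℂ)‖ ^ 2 = 1 - q ^ (2 * (n + 1)) := by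
    rw [Complex.norm_real, Real.norm_of_nonneg (Real.sqrt_nonneg _),
      Real.sq_sqrt (sub_nonneg.2 (pow_le_one₀ hq0.le hq1.le))]
  have hrel := inv_sq_mul_one_sub_pow_two_mul_succ hq0.ne'
  have hCS_rel := hCS.smul_adjoint_mul_self_eq (a := q⁻¹ ^ 2)
    (b := q⁻¹ ^ 2 * (1 - q ^ 2) ^ 2 + (1 - q ^ 2))
    (by simpa only [hweight, mul_zero, pow_zero, sub_self, zero_add] using hrel 0)
    (fun n => by simpa only [hweight] using hrel (n + 1))
  have hU : W22 ∈ unitary (H →L[ℂ] H) :=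
    hW22 ▸ Unitary.smul_mem_of_mem (Complex.exp_ofReal_mul_I_mem_unitary φ) (one_mem _)
  have hU_mul_star : W22 * adjoint W22 = 1 :=
    star_eq_adjoint W22 ▸ Unitary.mul_star_self_of_mem hU
  have hU_star_mul : adjoint W22 * W22 = 1 :=
    star_eq_adjoint W22 ▸ Unitary.star_mul_self_of_mem hU
  subst hW11 hW12 hW21
  refine ⟨?_, by simp [hU_mul_star], by simp [hU_mul_star],
    by simp [hU_mul_star, hU_star_mul, ← add_smul], hCS_rel⟩
  have hq : ((q ^ 2 : ℝ) : ℂ) * ((q⁻¹ : ℝ) : ℂ) * ((q⁻¹ : ℝ) : ℂ) = 1 := by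
    norm_cast
    field_simp
  simp only [map_smulₛₗ, Complex.conj_ofReal, hU_mul_star, map_zero, zero_mul, add_zero,
    smul_zero, sub_zero, smul_mul_smul_comm]
  push_cast at hCS_rel hq ⊢
  linear_combination (norm := module) hCS_rel - hq • (C * S * adjoint (C * S))

open ContinuousLinearMap in
/-- The operators of the representation θ_φ of Pol(Mat₂)_q,
`θ_φ(z₂²) = e^{iφ}·I`, `θ_φ(z₂¹) = θ_φ(z₁²) = 0`, `θ_φ(z₁¹) = q^{-1} CS`,
satisfy the defining relations (ff2); in particular the first relation of (ff2)
becomes `q^{-2}(CS)*(CS) = (CS)(CS)* + q^{-2}(1−q²)²·I + (1−q²)·I`, which holds. -/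
theorem stmt10 {H : Type*} [NormedAddCommGroup H] [InnerProductSpace ℂ H] [CompleteSpace H]
    (q : ℝ) (hq0 : 0 < q) (hq1 : q < 1)
    (φ : ℝ) (hφ : φ ∈ Set.Ico 0 (2 * Real.pi))
    (e : HilbertBasis ℕ ℂ H)
    (S C : H →L[ℂ] H)
    (hS : ∀ n : ℕ, S (e n) = e (n + 1))
    (hC : ∀ n : ℕ, C (e n) = ((Real.sqrt (1 - q ^ (2 * n)) : ℝ) : ℂ) • e n)
    (W11 W12 W21 W22 : H →L[ℂ] H)
    (hW22 : W22 = Complex.exp (φ * Complex.I) • (1 : H →L[ℂ] H))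
    (hW21 : W21 = 0) (hW12 : W12 = 0)
    (hW11 : W11 = ((q⁻¹ : ℝ) : ℂ) • (C * S)) :
    -- the relations (ff2) for the θ_φ operators
    (adjoint W11 * W11
        = ((q ^ 2 : ℝ) : ℂ) • (W11 * adjoint W11)
          - ((1 - q ^ 2 : ℝ) : ℂ) • (W21 * adjoint W21 + W12 * adjoint W12)
          + ((q⁻¹ ^ 2 * (1 - q ^ 2) ^ 2 : ℝ) : ℂ) • (W22 * adjoint W22)
          + ((1 - q ^ 2 : ℝ) : ℂ) • 1)
    ∧ (adjoint W21 * W21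
        = ((q ^ 2 : ℝ) : ℂ) • (W21 * adjoint W21)
          - ((1 - q ^ 2 : ℝ) : ℂ) • (W22 * adjoint W22) + ((1 - q ^ 2 : ℝ) : ℂ) • 1)
    ∧ (adjoint W12 * W12
        = ((q ^ 2 : ℝ) : ℂ) • (W12 * adjoint W12)
          - ((1 - q ^ 2 : ℝ) : ℂ) • (W22 * adjoint W22) + ((1 - q ^ 2 : ℝ) : ℂ) • 1)
    ∧ (adjoint W22 * W22
        = ((q ^ 2 : ℝ) : ℂ) • (W22 * adjoint W22) + ((1 - q ^ 2 : ℝ) : ℂ) • 1)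
    -- the simplified form of the first relation
    ∧ ((q⁻¹ ^ 2 : ℝ) : ℂ) • (adjoint (C * S) * (C * S))
        = (C * S) * adjoint (C * S)
          + ((q⁻¹ ^ 2 * (1 - q ^ 2) ^ 2 + (1 - q ^ 2) : ℝ) : ℂ) • 1 :=
  stmt10_general q hq0 hq1 φ e S C hS hC W11 W12 W21 W22 hW22 hW21 hW12 hW11
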